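/- If two 1-parameter formal deformations g_t = Σ G_i t^i and g_t' = Σ G_i' t^i of a Hom-Novikov superalgebra (A, *, α) are equivalent via a formal isomorphism φ_t = id + Σ_{i≥1} φ_i t^i commuting with α, then G₁ − G₁' = δ¹_hom φ₁; i.e., G₁ and G₁' lie in the same cohomology class in H²_α(A,A). -/

import Mathlib

/-!
Comparing the coefficients of `t` in `φ_t (g_t x y) = g'_t (φ_t x) (φ_t y)`, where
`φ₀ = id` and `G₀ = G₀' = *`, gives `G₁ x y + φ₁ (x * y) = G₁' x y + φ₁ x * y + x * φ₁ y`.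
-/

/-- A 1-parameter formal deformation of a Hom-Novikov superalgebra, given by its
sequence of coefficient bilinear maps. -/
def IsDeformation {𝕜 A : Type*} [Field 𝕜] [AddCommGroup A] [Module 𝕜 A]
    (G : ZMod 2 → Submodule 𝕜 A) (mul : A →ₗ[𝕜] A →ₗ[𝕜] A) (α : A →ₗ[𝕜] A)
    (Gd : ℕ → A →ₗ[𝕜] A →ₗ[𝕜] A) : Prop :=
  Gd 0 = mul ∧
  (∀ n : ℕ, ∀ i j : ZMod 2, ∀ x ∈ G i, ∀ y ∈ G j, Gd n x y ∈ G (i + j)) ∧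
  (∀ n : ℕ, ∀ x y : A, α (Gd n x y) = Gd n (α x) (α y)) ∧
  (∀ n : ℕ, ∀ i j k : ZMod 2, ∀ x ∈ G i, ∀ y ∈ G j, ∀ z ∈ G k,
    ∑ p ∈ Finset.HasAntidiagonal.antidiagonal n,
      (Gd p.1 (α x) (Gd p.2 y z) - Gd p.1 (Gd p.2 x y) (α z)
        - ((-1 : 𝕜) ^ (i.val * j.val)) •
            (Gd p.1 (α y) (Gd p.2 x z) - Gd p.1 (Gd p.2 y x) (α z))) = 0) ∧
  (∀ n : ℕ, ∀ i j k : ZMod 2, ∀ x ∈ G i, ∀ y ∈ G j, ∀ z ∈ G k,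
    ∑ p ∈ Finset.HasAntidiagonal.antidiagonal n,
      (Gd p.1 (Gd p.2 x y) (α z)
        - ((-1 : 𝕜) ^ (j.val * k.val)) • Gd p.1 (Gd p.2 x z) (α y)) = 0)

open Finset

section FirstOrder

variable {R A : Type*} [CommSemiring R] [AddCommGroup A] [Module R A]

/-- The paper's `δ¹_hom f`, whose range is `B²_α(A, A)`. -/
def homCoboundary (mul : A →ₗ[R] A →ₗ[R] A) (f : A →ₗ[R] A) (x y : A) : A :=
  mul (f x) y + mul x (f y) - f (mul x y)

theorem sub_eq_homCoboundary_of_equiv {mul : A →ₗ[R] A →ₗ[R] A}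
    {g g' : ℕ → A →ₗ[R] A →ₗ[R] A} {φ : ℕ → A →ₗ[R] A}
    (hg : g 0 = mul) (hg' : g' 0 = mul) (hφ : φ 0 = LinearMap.id) {x y : A}
    (hequiv : ∑ p ∈ antidiagonal 1, φ p.1 (g p.2 x y)
      = ∑ p ∈ antidiagonal 1, ∑ q ∈ antidiagonal p.2, g' p.1 (φ q.1 x) (φ q.2 y)) :
    g 1 x y - g' 1 x y = homCoboundary mul (φ 1) x y := by
  simp only [Nat.sum_antidiagonal_succ, Nat.antidiagonal_zero, sum_singleton, zero_add,
    hg, hg', hφ, LinearMap.id_apply] at hequiv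
  rw [homCoboundary]
  linear_combination (norm := abel) hequiv

end FirstOrder

theorem stmt16_general
    (𝕜 A : Type*) [Field 𝕜] [AddCommGroup A] [Module 𝕜 A]
    (G : ZMod 2 → Submodule 𝕜 A)
    (mul : A →ₗ[𝕜] A →ₗ[𝕜] A) (α : A →ₗ[𝕜] A)
    (Gd Gd' : ℕ → A →ₗ[𝕜] A →ₗ[𝕜] A)
    (hGd : IsDeformation G mul α Gd)
    (hGd' : IsDeformation G mul α Gd')
    (φ : ℕ → A →ₗ[𝕜] A)
    (hφ0 : φ 0 = LinearMap.id)
    (hequiv : ∀ n : ℕ, ∀ x y : A,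
      ∑ p ∈ Finset.HasAntidiagonal.antidiagonal n, φ p.1 (Gd p.2 x y)
        = ∑ p ∈ Finset.HasAntidiagonal.antidiagonal n,
            ∑ q ∈ Finset.HasAntidiagonal.antidiagonal p.2, Gd' p.1 (φ q.1 x) (φ q.2 y)) :
    ∀ x y : A,
      Gd 1 x y - Gd' 1 x y = mul (φ 1 x) y + mul x (φ 1 y) - φ 1 (mul x y) :=
  fun x y => sub_eq_homCoboundary_of_equiv hGd.1 hGd'.1 hφ0 (hequiv 1 x y)

theorem stmt16
    (𝕜 A : Type*) [Field 𝕜] [AddCommGroup A] [Module 𝕜 A]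
    (G : ZMod 2 → Submodule 𝕜 A) (hG : DirectSum.IsInternal G)
    (mul : A →ₗ[𝕜] A →ₗ[𝕜] A) (α : A →ₗ[𝕜] A)
    (hmul_even : ∀ i j : ZMod 2, ∀ x ∈ G i, ∀ y ∈ G j, mul x y ∈ G (i + j))
    (hα_even : ∀ i : ZMod 2, ∀ x ∈ G i, α x ∈ G i)
    (hα_mul : ∀ x y : A, α (mul x y) = mul (α x) (α y))
    (hls : ∀ i j k : ZMod 2, ∀ x ∈ G i, ∀ y ∈ G j, ∀ z ∈ G k,
      mul (mul x y) (α z) - mul (α x) (mul y z)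
        = ((-1 : 𝕜) ^ (i.val * j.val)) • (mul (mul y x) (α z) - mul (α y) (mul x z)))
    (hrn : ∀ i j k : ZMod 2, ∀ x ∈ G i, ∀ y ∈ G j, ∀ z ∈ G k,
      mul (mul x y) (α z) = ((-1 : 𝕜) ^ (j.val * k.val)) • mul (mul x z) (α y))
    (Gd Gd' : ℕ → A →ₗ[𝕜] A →ₗ[𝕜] A)
    (hGd : IsDeformation G mul α Gd)
    (hGd' : IsDeformation G mul α Gd')
    (φ : ℕ → A →ₗ[𝕜] A)
    (hφ0 : φ 0 = LinearMap.id)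
    (hφα : ∀ n : ℕ, ∀ x : A, φ n (α x) = α (φ n x))
    (hequiv : ∀ n : ℕ, ∀ x y : A,
      ∑ p ∈ Finset.HasAntidiagonal.antidiagonal n, φ p.1 (Gd p.2 x y)
        = ∑ p ∈ Finset.HasAntidiagonal.antidiagonal n,
            ∑ q ∈ Finset.HasAntidiagonal.antidiagonal p.2, Gd' p.1 (φ q.1 x) (φ q.2 y)) :
    ∀ x y : A,
      Gd 1 x y - Gd' 1 x y = mul (φ 1 x) y + mul x (φ 1 y) - φ 1 (mul x y) :=
  stmt16_general 𝕜 A G mul α Gd Gd' hGd hGd' φ hφ0 hequiv
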